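/- arXiv:1108.3024 — 2 statements merged into one kernel-verified Lean document; each statement's English description precedes it below -/
import Mathlib

section
/- Let |q| < 1, |ρ| < 1, and let n ≥ 0 be an integer. Then for all real x, y: q^{n(n-1)/2} ρ^n (1-q)^n Q_{n,n}(x,y|ρ,q) = Σ_{k=0}^{n} (-1)^k q^{(n-k)(n-k-1)/2} [n choose k]_q · (∏_{j=0}^{k-1} ω(x√(1-q)/2, y√(1-q)/2 | ρ q^j)) / (ρ²;q)_{2k}, where an empty product ∏_{j=0}^{-1} is interpreted as 1. -/
open Finset MeasureTheory

noncomputable section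

/-- [n]_q = 1 + q + ... + q^{n-1} -/
def qNat (q : ℝ) (n : ℕ) : ℝ := ∑ j ∈ Finset.range n, q ^ j

/-- [n]_q! -/
def qFact (q : ℝ) : ℕ → ℝ
  | 0 => 1
  | n + 1 => qFact q n * qNat q (n + 1)

/-- q-binomial coefficient -/
def qBinom (q : ℝ) (n k : ℕ) : ℝ :=
  if k ≤ n then qFact q n / (qFact q (n - k) * qFact q k) else 0

/-- q-Pochhammer symbol (a;q)_n -/
def qPoch (a q : ℝ) (n : ℕ) : ℝ := ∏ j ∈ Finset.range n, (1 - a * q ^ j)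

/-- q-Pochhammer symbol (a;q)_∞ -/
def qPochInf (a q : ℝ) : ℝ := ∏' j : ℕ, (1 - a * q ^ j)

/-- continuous q-Hermite polynomials H_n(x|q) -/
def qHermite (q : ℝ) : ℕ → ℝ → ℝ
  | 0, _ => 1
  | 1, x => x
  | n + 2, x => x * qHermite q (n + 1) x - qNat q (n + 1) * qHermite q n x

/-- big q-Hermite polynomials H_n(x|a,q) -/
def bigqHermite (q a : ℝ) : ℕ → ℝ → ℝ
  | 0, _ => 1
  | 1, x => x - a
  | n + 2, x => (x - a * q ^ (n + 1)) * bigqHermite q a (n + 1) x -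
      qNat q (n + 1) * bigqHermite q a n x

/-- rescaled Al-Salam--Chihara polynomials P_n(x|y,ρ,q) -/
def ascP (q y ρ : ℝ) : ℕ → ℝ → ℝ
  | 0, _ => 1
  | 1, x => x - ρ * y
  | n + 2, x => (x - ρ * y * q ^ (n + 1)) * ascP q y ρ (n + 1) x -
      qNat q (n + 1) * (1 - ρ ^ 2 * q ^ n) * ascP q y ρ n x

/-- generating function φ_H(x|t,q) of the q-Hermite polynomials -/
def phiH (q t x : ℝ) : ℝ := ∑' n : ℕ, t ^ n / qFact q n * qHermite q n x

/-- γ_{i,j}(x,y|ρ,q) -/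
def gammaPM (q ρ : ℝ) (i j : ℕ) (x y : ℝ) : ℝ :=
  ∑' n : ℕ, ρ ^ n / qFact q n * qHermite q (n + i) x * qHermite q (n + j) y

/-- the polynomials Q_{i,j}(x,y|ρ,q) -/
def Qpoly (q ρ : ℝ) (i j : ℕ) (x y : ℝ) : ℝ :=
  ∑ s ∈ Finset.range (j + 1),
    (-1 : ℝ) ^ s * q ^ (s * (s - 1) / 2) * qBinom q j s * ρ ^ s * qHermite q (j - s) y *
      ascP q y ρ (i + s) x / qPoch (ρ ^ 2) q (i + s)

/-- the interval S(q) = [-2/√(1-q), 2/√(1-q)] -/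
def Sq (q : ℝ) : Set ℝ := Set.Icc (-(2 / Real.sqrt (1 - q))) (2 / Real.sqrt (1 - q))

/-- ω(x,y|ρ) -/
def omegaPM (x y ρ : ℝ) : ℝ :=
  (1 - ρ ^ 2) ^ 2 - 4 * ρ * (1 + ρ ^ 2) * x * y + 4 * ρ ^ 2 * (x ^ 2 + y ^ 2)

/-- l(x|a) -/
def lPM (x a : ℝ) : ℝ := (1 + a) ^ 2 - 4 * a * x ^ 2

/-- the q-Normal density f_N(x|q) -/
def fN (q x : ℝ) : ℝ :=
  Real.sqrt ((1 - q) * (4 - (1 - q) * x ^ 2)) * qPochInf q q / (2 * Real.pi) *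
    ∏' j : ℕ, lPM (x * Real.sqrt (1 - q) / 2) (q ^ (j + 1))

/-- the (q,ρ)-Conditional Normal density f_CN(x|y,ρ,q) -/
def fCN (q ρ x y : ℝ) : ℝ :=
  fN q x * qPochInf (ρ ^ 2) q /
    ∏' j : ℕ, omegaPM (x * Real.sqrt (1 - q) / 2) (y * Real.sqrt (1 - q) / 2) (ρ * q ^ j)

/-- the (ρ,q)-bivariate Normal density f_{2D}(x,y|ρ,q) -/
def f2D (q ρ x y : ℝ) : ℝ := fCN q ρ x y * fN q y

/-!
Write `L_n(ρ)` for the left-hand side, `R_n(ρ)` for the right-hand side and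
`ω(ρ) = ω(x√(1-q)/2, y√(1-q)/2 | ρ)`. Both sides satisfy
`f_{n+1}(ρ) = q^n f_n(ρ) - ω(ρ) / ((1-ρ²)(1-ρ²q)) · f_n(ρq)` and `L_0 = R_0 = 1`, so they agree by
induction on `n`, for all `|ρ| < 1` at once.

For `R` the recursion is the q-Pascal rule `[n+1, k+1] = q^(k+1) [n, k+1] + [n, k]` together with
`(ρ²;q)_{2k+2} = (1-ρ²)(1-ρ²q) ((ρq)²;q)_{2k}`. For `L` it is the case `i = j = n` of the shift relation
`(1-ρ²)(1-ρ²q) (Q_{i,j}(ρ) - ρ(1-q) Q_{i+1,j+1}(ρ)) = ω(ρ) Q_{i,j}(ρq)`, proved by induction on `j`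
from the recurrence `Q_{i,j+1} = y Q_{i,j} - [j] Q_{i,j-1} - ρ q^j Q_{i+1,j}` (itself the q-Pascal rule
plus the q-Hermite recurrence). Its base case `j = 0` is an identity between the Al-Salam–Chihara
polynomials with parameters `ρ` and `ρq`, checked by induction from their three-term recurrence.
-/

section QNumbers

lemma qNat_zero (q : ℝ) : qNat q 0 = 0 := sum_range_zero _

lemma qNat_succ (q : ℝ) (n : ℕ) : qNat q (n + 1) = qNat q n + q ^ n := sum_range_succ _ n

lemma qNat_add (q : ℝ) (a b : ℕ) : qNat q (a + b) = qNat q a + q ^ a * qNat q b := by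
  simp only [qNat, sum_range_add, mul_sum, pow_add]

lemma qFact_succ (q : ℝ) (n : ℕ) : qFact q (n + 1) = qFact q n * qNat q (n + 1) := rfl

variable {q : ℝ}

lemma qNat_pos (hq : -1 < q) {n : ℕ} (hn : n ≠ 0) : 0 < qNat q n :=
  geom_sum_pos' (by linarith) hn

lemma qFact_pos (hq : -1 < q) (n : ℕ) : 0 < qFact q n := by
  induction n with
  | zero => exact one_pos
  | succ n ih => exact mul_pos ih (qNat_pos hq n.succ_ne_zero)

lemma qBinom_of_le {n k : ℕ} (h : k ≤ n) :
    qBinom q n k = qFact q n / (qFact q (n - k) * qFact q k) := if_pos h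

lemma qBinom_of_lt {n k : ℕ} (h : n < k) : qBinom q n k = 0 := if_neg h.not_ge

lemma qBinom_zero_right (hq : -1 < q) (n : ℕ) : qBinom q n 0 = 1 := by
  simpa [qBinom, qFact] using div_self (qFact_pos hq n).ne'

lemma qBinom_self (hq : -1 < q) (n : ℕ) : qBinom q n n = 1 := by
  simpa [qBinom, qFact] using div_self (qFact_pos hq n).ne'

lemma qBinom_succ_succ (hq : -1 < q) (n k : ℕ) :
    qBinom q (n + 1) (k + 1) = qBinom q n (k + 1) + q ^ (n - k) * qBinom q n k := by
  obtain h | rfl | h := lt_trichotomy k n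
  · obtain ⟨m, rfl⟩ := Nat.exists_eq_add_of_lt h
    have hsplit : qNat q (k + m + 1 + 1) = qNat q (m + 1) + q ^ (m + 1) * qNat q (k + 1) := by
      rw [← qNat_add]; congr 1; omega
    rw [qBinom_of_le (by omega), qBinom_of_le (by omega), qBinom_of_le (by omega),
      show k + m + 1 + 1 - (k + 1) = m + 1 by omega, show k + m + 1 - (k + 1) = m by omega,
      show k + m + 1 - k = m + 1 by omega, qFact_succ q (k + m + 1), qFact_succ q m,
      qFact_succ q k, hsplit]
    have hF := qFact_pos hq
    field_simp [(hF m).ne', (hF k).ne', (hF (k + m + 1)).ne',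
      (qNat_pos hq m.succ_ne_zero).ne', (qNat_pos hq k.succ_ne_zero).ne']
  · simp [qBinom_self hq, qBinom_of_lt]
  · simp [qBinom_of_lt, h, h.trans (Nat.lt_succ_self k)]

lemma qBinom_succ_succ' (hq : -1 < q) (n k : ℕ) :
    qBinom q (n + 1) (k + 1) = q ^ (k + 1) * qBinom q n (k + 1) + qBinom q n k := by
  obtain h | rfl | h := lt_trichotomy k n
  · obtain ⟨m, rfl⟩ := Nat.exists_eq_add_of_lt h
    have hsplit : qNat q (k + m + 1 + 1) = q ^ (k + 1) * qNat q (m + 1) + qNat q (k + 1) := by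
      rw [add_comm _ (qNat q _), ← qNat_add]; congr 1; omega
    rw [qBinom_of_le (by omega), qBinom_of_le (by omega), qBinom_of_le (by omega),
      show k + m + 1 + 1 - (k + 1) = m + 1 by omega, show k + m + 1 - (k + 1) = m by omega,
      show k + m + 1 - k = m + 1 by omega, qFact_succ q (k + m + 1), qFact_succ q m,
      qFact_succ q k, hsplit]
    have hF := qFact_pos hq
    field_simp [(hF m).ne', (hF k).ne', (hF (k + m + 1)).ne',
      (qNat_pos hq m.succ_ne_zero).ne', (qNat_pos hq k.succ_ne_zero).ne']
  · simp [qBinom_self hq, qBinom_of_lt]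
  · simp [qBinom_of_lt, h, h.trans (Nat.lt_succ_self k)]

lemma qBinom_mul_qNat_sub (hq : -1 < q) (n k : ℕ) :
    qBinom q n k * qNat q (n - k) = qNat q n * qBinom q (n - 1) k := by
  obtain h | h := lt_or_ge k n
  · obtain ⟨m, rfl⟩ := Nat.exists_eq_add_of_lt h
    rw [qBinom_of_le (by omega), qBinom_of_le (by omega), show k + m + 1 - k = m + 1 by omega,
      show k + m + 1 - 1 - k = m by omega, Nat.add_sub_cancel, qFact_succ q (k + m), qFact_succ q m]
    have hF := qFact_pos hq
    field_simp [(hF m).ne', (hF k).ne', (qNat_pos hq m.succ_ne_zero).ne']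
  · obtain rfl | hn := Nat.eq_zero_or_pos n
    · simp [qNat_zero]
    · simp [Nat.sub_eq_zero_of_le h, qNat_zero, qBinom_of_lt (show n - 1 < k by omega)]

end QNumbers

section Pochhammer

lemma qPoch_succ (a q : ℝ) (n : ℕ) : qPoch a q (n + 1) = qPoch a q n * (1 - a * q ^ n) :=
  prod_range_succ _ n

lemma qPoch_succ' (a q : ℝ) (n : ℕ) : qPoch a q (n + 1) = (1 - a) * qPoch (a * q) q n := by
  simp only [qPoch, prod_range_succ', pow_succ, pow_zero, mul_one, mul_assoc, mul_comm]

lemma qPoch_sq_add_two (ρ q : ℝ) (n : ℕ) :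
    qPoch (ρ ^ 2) q (n + 2) = (1 - ρ ^ 2) * (1 - ρ ^ 2 * q) * qPoch ((ρ * q) ^ 2) q n := by
  rw [qPoch_succ', qPoch_succ', mul_pow, mul_assoc (ρ ^ 2) q q, ← sq, mul_assoc]

variable {q ρ : ℝ}

lemma one_sub_sq_mul_pow_pos (hq : |q| ≤ 1) (hρ : |ρ| < 1) (j : ℕ) : 0 < 1 - ρ ^ 2 * q ^ j := by
  have hqj : q ^ j ≤ 1 := (le_abs_self _).trans (abs_pow q j ▸ pow_le_one₀ (abs_nonneg q) hq)
  have hρ2 : ρ ^ 2 < 1 := (sq_lt_one_iff_abs_lt_one ρ).mpr hρ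
  nlinarith [sq_nonneg ρ]

lemma qPoch_sq_pos (hq : |q| ≤ 1) (hρ : |ρ| < 1) (n : ℕ) : 0 < qPoch (ρ ^ 2) q n :=
  prod_pos fun j _ ↦ one_sub_sq_mul_pow_pos hq hρ j

end Pochhammer

lemma qHermite_succ (q y : ℝ) (m : ℕ) :
    qHermite q (m + 1) y = y * qHermite q m y - qNat q m * qHermite q (m - 1) y := by
  cases m with
  | zero => simp [qHermite, qNat_zero]
  | succ m => rfl

lemma ascP_add_two (q y ρ : ℝ) (n : ℕ) (x : ℝ) :
    ascP q y ρ (n + 2) x =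
      (x - ρ * y * q ^ (n + 1)) * ascP q y ρ (n + 1) x -
        qNat q (n + 1) * (1 - ρ ^ 2 * q ^ n) * ascP q y ρ n x := rfl

lemma omegaPM_mul_half {q c : ℝ} (hc : c ^ 2 = 1 - q) (x y ρ : ℝ) :
    omegaPM (x * c / 2) (y * c / 2) ρ =
      (1 - ρ ^ 2) ^ 2 - ρ * (1 + ρ ^ 2) * (1 - q) * x * y + ρ ^ 2 * (1 - q) * (x ^ 2 + y ^ 2) := by
  rw [omegaPM, ← hc]
  ring

lemma ascP_shift {q c : ℝ} (hc : c ^ 2 = 1 - q) (ρ x y : ℝ) (i : ℕ) :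
    (1 - ρ ^ 2 * q ^ i) * (1 - ρ ^ 2 * q ^ (i + 1)) * ascP q y ρ i x
      - ρ * (1 - q) * (1 - ρ ^ 2 * q ^ (i + 1)) * y * ascP q y ρ (i + 1) x
      + ρ ^ 2 * (1 - q) * ascP q y ρ (i + 2) x
    = omegaPM (x * c / 2) (y * c / 2) ρ * ascP q y (ρ * q) i x := by
  rw [omegaPM_mul_half hc]
  induction i using Nat.twoStepInduction with
  | zero =>
    simp only [ascP, qNat_succ, qNat_zero]
    ring
  | one =>
    simp only [ascP, qNat_succ, qNat_zero]
    ring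
  | more i h₀ h₁ =>
    simp only [ascP_add_two, pow_succ, qNat_succ] at *
    linear_combination (x - ρ * q * y * (q ^ i * q)) * h₁
      - ((qNat q i + q ^ i) * (1 - (ρ * q) ^ 2 * q ^ i)) * h₀

section Qpoly

/-- The `s`-th summand of `Qpoly q ρ i j x y`, with the degree `m` of its q-Hermite factor
decoupled from `j`. -/
def qpolyTerm (q ρ : ℝ) (i j m : ℕ) (x y : ℝ) (s : ℕ) : ℝ :=
  (-1 : ℝ) ^ s * q ^ (s * (s - 1) / 2) * qBinom q j s * ρ ^ s * qHermite q (m - s) y *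
    ascP q y ρ (i + s) x / qPoch (ρ ^ 2) q (i + s)

variable {q : ℝ} (ρ : ℝ) (x y : ℝ)

lemma qpolyTerm_of_lt {i j m s : ℕ} (h : j < s) : qpolyTerm q ρ i j m x y s = 0 := by
  simp [qpolyTerm, qBinom_of_lt h]

lemma Qpoly_eq_sum {i j N : ℕ} (hN : j + 1 ≤ N) :
    Qpoly q ρ i j x y = ∑ s ∈ range N, qpolyTerm q ρ i j j x y s :=
  sum_subset (range_subset_range.mpr hN) fun s _ hs ↦
    qpolyTerm_of_lt ρ x y (by simpa using hs)

lemma Qpoly_zero_right (i : ℕ) : Qpoly q ρ i 0 x y = ascP q y ρ i x / qPoch (ρ ^ 2) q i := by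
  simp [Qpoly, qBinom, qFact, qHermite]

variable (hq : -1 < q)
include hq

lemma qpolyTerm_zero_right (i j m : ℕ) :
    qpolyTerm q ρ i (j + 1) m x y 0 = qpolyTerm q ρ i j m x y 0 := by
  simp [qpolyTerm, qBinom_zero_right hq]

lemma qpolyTerm_succ_succ {i j s : ℕ} (m : ℕ) (hs : s ≤ j) :
    qpolyTerm q ρ i (j + 1) (m + 1) x y (s + 1) =
      qpolyTerm q ρ i j (m + 1) x y (s + 1) - ρ * q ^ j * qpolyTerm q ρ (i + 1) j m x y s := by
  have hexp : q ^ ((s + 1) * (s + 1 - 1) / 2) * q ^ (j - s) = q ^ (s * (s - 1) / 2) * q ^ j := by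
    rw [← pow_add, ← pow_add, Nat.triangle_succ]
    congr 1
    omega
  simp only [qpolyTerm, qBinom_succ_succ hq, Nat.add_sub_add_right, add_assoc, add_comm 1 s]
  linear_combination (-1 : ℝ) ^ (s + 1) * qBinom q j s * ρ ^ (s + 1) * qHermite q (m - s) y *
    ascP q y ρ (i + (s + 1)) x / qPoch (ρ ^ 2) q (i + (s + 1)) * hexp

lemma qpolyTerm_hermite_succ {i j s : ℕ} (hs : s ≤ j) :
    qpolyTerm q ρ i j (j + 1) x y s =
      y * qpolyTerm q ρ i j j x y s - qNat q j * qpolyTerm q ρ i (j - 1) (j - 1) x y s := by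
  have habs := qBinom_mul_qNat_sub hq j s
  simp only [qpolyTerm, Nat.sub_add_comm hs, qHermite_succ, show j - 1 - s = j - s - 1 by omega]
  linear_combination -((-1 : ℝ) ^ s * q ^ (s * (s - 1) / 2) * ρ ^ s * qHermite q (j - s - 1) y *
    ascP q y ρ (i + s) x / qPoch (ρ ^ 2) q (i + s)) * habs

lemma Qpoly_succ_right (i j : ℕ) :
    Qpoly q ρ i (j + 1) x y =
      y * Qpoly q ρ i j x y - qNat q j * Qpoly q ρ i (j - 1) x y -
        ρ * q ^ j * Qpoly q ρ (i + 1) j x y := by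
  calc Qpoly q ρ i (j + 1) x y
      = ∑ s ∈ range (j + 1), (qpolyTerm q ρ i j (j + 1) x y (s + 1) -
          ρ * q ^ j * qpolyTerm q ρ (i + 1) j j x y s) + qpolyTerm q ρ i j (j + 1) x y 0 := by
        rw [Qpoly_eq_sum ρ x y le_rfl, sum_range_succ', qpolyTerm_zero_right ρ x y hq]
        congr 1
        exact sum_congr rfl fun s hs ↦
          qpolyTerm_succ_succ ρ x y hq j (Nat.lt_succ_iff.mp (mem_range.mp hs))
    _ = ∑ s ∈ range (j + 1), qpolyTerm q ρ i j (j + 1) x y s -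
          ρ * q ^ j * Qpoly q ρ (i + 1) j x y := by
        rw [sum_sub_distrib, ← mul_sum, sub_add_eq_add_sub, ← sum_range_succ',
          sum_range_succ, qpolyTerm_of_lt ρ x y (Nat.lt_succ_self j), add_zero,
          Qpoly_eq_sum ρ x y le_rfl]
    _ = ∑ s ∈ range (j + 1), (y * qpolyTerm q ρ i j j x y s -
          qNat q j * qpolyTerm q ρ i (j - 1) (j - 1) x y s) -
          ρ * q ^ j * Qpoly q ρ (i + 1) j x y := by
        congr 1
        exact sum_congr rfl fun s hs ↦
          qpolyTerm_hermite_succ ρ x y hq (Nat.lt_succ_iff.mp (mem_range.mp hs))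
    _ = _ := by
        rw [sum_sub_distrib, ← mul_sum, ← mul_sum, ← Qpoly_eq_sum ρ x y le_rfl,
          ← Qpoly_eq_sum ρ x y (by omega)]

end Qpoly

section Shift

variable {q c ρ : ℝ} (hq : q ∈ Set.Ioc (-1) 1) (hρ : |ρ| < 1) (hc : c ^ 2 = 1 - q) (x y : ℝ)
include hq hρ hc

lemma Qpoly_shift_zero (i : ℕ) :
    (1 - ρ ^ 2) * (1 - ρ ^ 2 * q) * (Qpoly q ρ i 0 x y - ρ * (1 - q) * Qpoly q ρ (i + 1) 1 x y) =
      omegaPM (x * c / 2) (y * c / 2) ρ * Qpoly q (ρ * q) i 0 x y := by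
  have hq' : |q| ≤ 1 := abs_le.mpr ⟨hq.1.le, hq.2⟩
  have ha := one_sub_sq_mul_pow_pos hq' hρ i
  have hb := one_sub_sq_mul_pow_pos hq' hρ (i + 1)
  have h₀ := one_sub_sq_mul_pow_pos hq' hρ 0
  have h₁ := one_sub_sq_mul_pow_pos hq' hρ 1
  simp only [pow_zero, pow_one, mul_one] at h₀ h₁
  have hD := qPoch_sq_pos hq' hρ i
  have hE : qPoch ((ρ * q) ^ 2) q i =
      qPoch (ρ ^ 2) q i * (1 - ρ ^ 2 * q ^ i) * (1 - ρ ^ 2 * q ^ (i + 1)) /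
        ((1 - ρ ^ 2) * (1 - ρ ^ 2 * q)) := by
    rw [← qPoch_succ, ← qPoch_succ, qPoch_sq_add_two]
    field_simp
  rw [Qpoly_succ_right ρ x y hq.1, Qpoly_zero_right, Qpoly_zero_right, Qpoly_zero_right,
    Qpoly_zero_right, qPoch_succ, qPoch_succ _ _ (i + 1), qPoch_succ, hE]
  simp only [qNat_zero, zero_mul, sub_zero, pow_zero, mul_one]
  field_simp
  linear_combination ascP_shift hc ρ x y i

lemma Qpoly_shift (j : ℕ) : ∀ i : ℕ,
    (1 - ρ ^ 2) * (1 - ρ ^ 2 * q) *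
        (Qpoly q ρ i j x y - ρ * (1 - q) * Qpoly q ρ (i + 1) (j + 1) x y) =
      omegaPM (x * c / 2) (y * c / 2) ρ * Qpoly q (ρ * q) i j x y := by
  induction j using Nat.twoStepInduction with
  | zero => exact Qpoly_shift_zero hq hρ hc x y
  | one =>
    intro i
    have hA := Qpoly_succ_right ρ x y hq.1 i 0
    have hB := Qpoly_succ_right ρ x y hq.1 (i + 1) 1
    have hC := Qpoly_succ_right (ρ * q) x y hq.1 i 0
    simp only [qNat_succ, qNat_zero, pow_zero, pow_one] at hA hB hC
    linear_combination (1 - ρ ^ 2) * (1 - ρ ^ 2 * q) * hA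
      - (1 - ρ ^ 2) * (1 - ρ ^ 2 * q) * ρ * (1 - q) * hB
      - omegaPM (x * c / 2) (y * c / 2) ρ * hC
      + y * Qpoly_shift_zero hq hρ hc x y i - ρ * q * Qpoly_shift_zero hq hρ hc x y (i + 1)
  | more j ih₀ ih₁ =>
    intro i
    have hA := Qpoly_succ_right ρ x y hq.1 i (j + 1)
    have hB := Qpoly_succ_right ρ x y hq.1 (i + 1) (j + 2)
    have hC := Qpoly_succ_right (ρ * q) x y hq.1 i (j + 1)
    rw [Nat.add_sub_cancel] at hA hC
    rw [show j + 2 - 1 = j + 1 by omega, qNat_succ q (j + 1)] at hB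
    linear_combination (1 - ρ ^ 2) * (1 - ρ ^ 2 * q) * hA
      - (1 - ρ ^ 2) * (1 - ρ ^ 2 * q) * ρ * (1 - q) * hB
      - omegaPM (x * c / 2) (y * c / 2) ρ * hC
      + y * ih₁ i - qNat q (j + 1) * ih₀ i - ρ * q ^ (j + 1) * q * ih₁ (i + 1)

end Shift

def diagQ (q ρ : ℝ) (n : ℕ) (x y : ℝ) : ℝ :=
  q ^ (n * (n - 1) / 2) * ρ ^ n * (1 - q) ^ n * Qpoly q ρ n n x y

lemma diagQ_succ {q c ρ : ℝ} (hq : q ∈ Set.Ioc (-1) 1) (hρ : |ρ| < 1) (hc : c ^ 2 = 1 - q)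
    (x y : ℝ) (n : ℕ) :
    diagQ q ρ (n + 1) x y = q ^ n * diagQ q ρ n x y -
      omegaPM (x * c / 2) (y * c / 2) ρ / ((1 - ρ ^ 2) * (1 - ρ ^ 2 * q)) * diagQ q (ρ * q) n x y := by
  have hq' : |q| ≤ 1 := abs_le.mpr ⟨hq.1.le, hq.2⟩
  have h₀ := one_sub_sq_mul_pow_pos hq' hρ 0
  have h₁ := one_sub_sq_mul_pow_pos hq' hρ 1
  simp only [pow_zero, pow_one, mul_one] at h₀ h₁
  have hstep : ρ * (1 - q) * Qpoly q ρ (n + 1) (n + 1) x y = Qpoly q ρ n n x y -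
      omegaPM (x * c / 2) (y * c / 2) ρ / ((1 - ρ ^ 2) * (1 - ρ ^ 2 * q)) *
        Qpoly q (ρ * q) n n x y := by
    rw [div_mul_eq_mul_div, ← Qpoly_shift hq hρ hc x y n n]
    field_simp
    ring
  rw [diagQ, diagQ, diagQ, Nat.triangle_succ, pow_add, mul_pow]
  linear_combination q ^ (n * (n - 1) / 2) * q ^ n * ρ ^ n * (1 - q) ^ n * hstep

/-- The `k`-th summand of the right-hand side, with an arbitrary function `w` in place of
`ω(x√(1-q)/2, y√(1-q)/2 | ·)`: its recursion in `n` uses nothing about `ω`. -/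
def omegaTerm (q : ℝ) (w : ℝ → ℝ) (n : ℕ) (ρ : ℝ) (k : ℕ) : ℝ :=
  (-1 : ℝ) ^ k * q ^ ((n - k) * (n - k - 1) / 2) * qBinom q n k *
    (∏ j ∈ range k, w (ρ * q ^ j)) / qPoch (ρ ^ 2) q (2 * k)

section OmegaTerm

variable {q : ℝ} (w : ℝ → ℝ) (n : ℕ) (ρ : ℝ)

lemma omegaTerm_of_lt {k : ℕ} (h : n < k) : omegaTerm q w n ρ k = 0 := by
  simp [omegaTerm, qBinom_of_lt h]

variable (hq : -1 < q)
include hq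

lemma omegaTerm_succ_zero : omegaTerm q w (n + 1) ρ 0 = q ^ n * omegaTerm q w n ρ 0 := by
  simp only [omegaTerm, qBinom_zero_right hq, Nat.sub_zero, Nat.triangle_succ, pow_add]
  ring

lemma omegaTerm_succ_succ (k : ℕ) :
    omegaTerm q w (n + 1) ρ (k + 1) = q ^ n * omegaTerm q w n ρ (k + 1) -
      w ρ / ((1 - ρ ^ 2) * (1 - ρ ^ 2 * q)) * omegaTerm q w n (ρ * q) k := by
  have hprod : ∏ j ∈ range (k + 1), w (ρ * q ^ j) = w ρ * ∏ j ∈ range k, w (ρ * q * q ^ j) := by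
    rw [prod_range_succ', pow_zero, mul_one, mul_comm]
    simp only [pow_succ', mul_assoc]
  simp only [omegaTerm, qBinom_succ_succ' hq, Nat.add_sub_add_right, hprod,
    show 2 * (k + 1) = 2 * k + 2 by omega, qPoch_sq_add_two, div_eq_mul_inv, mul_inv]
  obtain hk | rfl | hk := lt_trichotomy k n
  · have hexp : q ^ ((n - k) * (n - k - 1) / 2) * q ^ (k + 1) =
        q ^ n * q ^ ((n - (k + 1)) * (n - (k + 1) - 1) / 2) := by
      rw [← pow_add, ← pow_add, show n - k = n - (k + 1) + 1 by omega, Nat.triangle_succ]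
      congr 1
      omega
    linear_combination (-1 : ℝ) ^ (k + 1) * qBinom q n (k + 1) *
      (w ρ * ∏ j ∈ range k, w (ρ * q * q ^ j)) * (1 - ρ ^ 2)⁻¹ * (1 - ρ ^ 2 * q)⁻¹ *
        (qPoch ((ρ * q) ^ 2) q (2 * k))⁻¹ * hexp
  · rw [qBinom_of_lt k.lt_succ_self]
    ring
  · rw [qBinom_of_lt hk, qBinom_of_lt (Nat.lt_succ_of_lt hk)]
    ring

lemma sum_omegaTerm_succ :
    ∑ k ∈ range (n + 2), omegaTerm q w (n + 1) ρ k =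
      q ^ n * ∑ k ∈ range (n + 1), omegaTerm q w n ρ k -
        w ρ / ((1 - ρ ^ 2) * (1 - ρ ^ 2 * q)) * ∑ k ∈ range (n + 1), omegaTerm q w n (ρ * q) k := by
  rw [sum_range_succ', omegaTerm_succ_zero w n ρ hq]
  simp only [omegaTerm_succ_succ w n ρ hq, sum_sub_distrib, ← mul_sum]
  rw [sub_add_eq_add_sub, ← mul_add, ← sum_range_succ' (omegaTerm q w n ρ), sum_range_succ,
    omegaTerm_of_lt w n ρ n.lt_succ_self, add_zero]

end OmegaTerm

/-- q^{n(n-1)/2} ρ^n (1-q)^n Q_{n,n}(x,y|ρ,q)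
= Σ_{k=0}^n (-1)^k q^{(n-k)(n-k-1)/2} [n choose k]_q (∏_{j<k} ω) / (ρ²;q)_{2k}. -/
theorem statement12 (q ρ : ℝ) (hq : |q| < 1) (hρ : |ρ| < 1) (n : ℕ) (x y : ℝ) :
    q ^ (n * (n - 1) / 2) * ρ ^ n * (1 - q) ^ n * Qpoly q ρ n n x y =
      ∑ k ∈ Finset.range (n + 1),
        (-1 : ℝ) ^ k * q ^ ((n - k) * (n - k - 1) / 2) * qBinom q n k *
          (∏ j ∈ Finset.range k,
            omegaPM (x * Real.sqrt (1 - q) / 2) (y * Real.sqrt (1 - q) / 2) (ρ * q ^ j)) /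
          qPoch (ρ ^ 2) q (2 * k) := by
  obtain ⟨hq₀, hq₁⟩ := abs_lt.mp hq
  have hc : Real.sqrt (1 - q) ^ 2 = 1 - q := Real.sq_sqrt (by linarith)
  change diagQ q ρ n x y = ∑ k ∈ range (n + 1),
    omegaTerm q (omegaPM (x * Real.sqrt (1 - q) / 2) (y * Real.sqrt (1 - q) / 2)) n ρ k
  induction n generalizing ρ with
  | zero => simp [diagQ, omegaTerm, Qpoly_zero_right, qBinom, qFact, qPoch, ascP]
  | succ n ih =>
    have hρq : |ρ * q| < 1 := by
      rw [abs_mul]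
      exact mul_lt_one_of_nonneg_of_lt_one_left (abs_nonneg ρ) hρ hq.le
    rw [diagQ_succ ⟨hq₀, hq₁.le⟩ hρ hc, sum_omegaTerm_succ _ _ _ hq₀, ih ρ hρ, ih (ρ * q) hρq]
end
end

section
/- For all integers n ≥ 1 and all real x, y, ρ: P_n(x|y,ρ,0) = U_n(x/2) - ρ y U_{n-1}(x/2) + ρ² U_{n-2}(x/2), where U_m is the Chebyshev polynomial of the second kind with the convention U_{-1} = 0. -/
open Finset MeasureTheory

noncomputable section

lemma qNat_zero_succ (n : ℕ) : qNat 0 (n+1) = 1 := by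
  simp [qNat, Finset.sum_range_succ']

lemma ascP_zero_cheb (x y ρ : ℝ) : ∀ m : ℕ,
    ascP 0 y ρ (m+1) x =
      (Polynomial.Chebyshev.U ℝ ((m:ℤ)+1)).eval (x / 2) -
        ρ * y * (Polynomial.Chebyshev.U ℝ (m:ℤ)).eval (x / 2) +
        ρ ^ 2 * (Polynomial.Chebyshev.U ℝ ((m:ℤ)-1)).eval (x / 2) := by
  intro m
  induction m using Nat.twoStepInduction with
  | zero =>
      simp [ascP, Polynomial.Chebyshev.U_one, Polynomial.Chebyshev.U_zero,
        Polynomial.Chebyshev.U_neg_one]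
      ring
  | one =>
      have h2 : Polynomial.Chebyshev.U ℝ 2 = 2 * Polynomial.X * Polynomial.Chebyshev.U ℝ 1 - Polynomial.Chebyshev.U ℝ 0 := by
        simpa using Polynomial.Chebyshev.U_add_two ℝ 0
      show ascP 0 y ρ 2 x = _
      simp [ascP, qNat_zero_succ, h2, Polynomial.Chebyshev.U_one, Polynomial.Chebyshev.U_zero]
      ring
  | more m ih1 ih2 =>
      have hrec : ascP 0 y ρ (m + 3) x =
          x * ascP 0 y ρ (m + 2) x - ascP 0 y ρ (m + 1) x := by
        show (x - ρ * y * 0 ^ (m + 2)) * ascP 0 y ρ (m + 2) x -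
            qNat 0 (m + 2) * (1 - ρ ^ 2 * 0 ^ (m+1)) * ascP 0 y ρ (m + 1) x = _
        simp [qNat_zero_succ]
      have hU : ∀ k : ℤ, (Polynomial.Chebyshev.U ℝ (k+2)).eval (x/2)
          = x * (Polynomial.Chebyshev.U ℝ (k+1)).eval (x/2)
            - (Polynomial.Chebyshev.U ℝ k).eval (x/2) := by
        intro k
        rw [Polynomial.Chebyshev.U_add_two]
        simp only [Polynomial.eval_sub, Polynomial.eval_mul, Polynomial.eval_ofNat, Polynomial.eval_X]
        ring
      rw [hrec, ih1, ih2]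
      push_cast
      have e1 := hU ((m:ℤ)+1)
      have e2 := hU (m:ℤ)
      have e3 := hU ((m:ℤ)-1)
      rw [show ((m:ℤ)+2)+1 = ((m:ℤ)+1)+2 by ring, e1,
        show ((m:ℤ)+2) = (m:ℤ)+2 from rfl, e2,
        show ((m:ℤ)+2)-1 = ((m:ℤ)-1)+2 by ring, e3]
      ring

/-- for n ≥ 1, P_n(x|y,ρ,0) = U_n(x/2) - ρ y U_{n-1}(x/2) + ρ² U_{n-2}(x/2),
with the convention U_{-1} = 0 (built into the ℤ-indexed Chebyshev polynomials). -/
theorem statement18 (n : ℕ) (hn : 1 ≤ n) (x y ρ : ℝ) :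
    ascP 0 y ρ n x =
      (Polynomial.Chebyshev.U ℝ (n : ℤ)).eval (x / 2) -
        ρ * y * (Polynomial.Chebyshev.U ℝ ((n : ℤ) - 1)).eval (x / 2) +
        ρ ^ 2 * (Polynomial.Chebyshev.U ℝ ((n : ℤ) - 2)).eval (x / 2) := by
  obtain ⟨m, rfl⟩ := Nat.exists_eq_add_of_le hn
  have := ascP_zero_cheb x y ρ m
  rw [show 1 + m = m + 1 by ring]
  push_cast
  convert this using 4 <;> ring
end
end
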